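/- Let (f_n) be a sequence of monotone increasing Boolean functions f_n : {0,1}^{Λ_n} → {0,1} with parameters p_n, and let Y_n(ω) = #{W ∈ W_0(f_n) : ω ≡ 0 on W} count the occurring 0-witnesses. If C := sup_n E[Y_n] < ∞, then for every ε ∈ (0,1), every n, and every 1-witness W ∈ W_1(f_n), one has P(f_n(ω^ε)=1 | ω ≡ 1 on W) ≥ 1 − C·ε. Consequently, if in addition (f_n) is non-degenerate, then (f_n) is not 1-strongly noise sensitive. -/

import Mathlib

/-!
Fix a set `W` forcing `f = 1` and condition on `ω ≡ 1` on `W`. If `f (ω^ε) = 0`, monotonicity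
yields a 0-witness `W'` with `ω^ε ≡ 0` on `W'`, and `W'` must meet `W`. Coordinates are
independent under the joint law of `(ω, ω^ε)`, and a site that is `1` in `ω` and `0` in `ω^ε`
has probability `p ε (1 - p)`, so
`P(ω ≡ 1 on W, ω^ε ≡ 0 on W') = ε ^ |W ∩ W'| p ^ |W| (1 - p) ^ |W'|`, which is at most
`ε P(ω ≡ 1 on W) P(ω ≡ 0 on W')`.
A union bound over `W'` gives `P(f(ω^ε) = 0 ∣ ω ≡ 1 on W) ≤ ε E[Y]`. If `P(f = 1) ≤ 1 - c`, the
1-SNS gap is therefore at least `c - C ε`, which stays positive for small `ε`.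
-/

open Finset Filter

namespace BooleanNoise

/-- The Boolean truth value of a proposition (classically). -/
noncomputable def bOf (P : Prop) : Bool := @decide P (Classical.propDecidable P)

section Basic

variable {Λ : Type*} [Fintype Λ] [DecidableEq Λ]

/-- Bernoulli(`p`) weight of a single bit. -/
def bern (p : ℝ) : Bool → ℝ := fun b => if b then p else 1 - p

/-- Weight of a configuration under the product Bernoulli(`p`) measure. -/
def wt (p : ℝ) (ω : Λ → Bool) : ℝ := ∏ i, bern p (ω i)

/-- Probability of an event under the product Bernoulli(`p`) measure. -/
noncomputable def pr (p : ℝ) (A : Set (Λ → Bool)) : ℝ :=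
  ∑ ω : Λ → Bool, A.indicator (wt p) ω

/-- Expectation of a real random variable under the product Bernoulli(`p`) measure. -/
noncomputable def ev (p : ℝ) (X : (Λ → Bool) → ℝ) : ℝ :=
  ∑ ω : Λ → Bool, wt p ω * X ω

/-- Joint single-coordinate weight of `(ω i, (ω^ε) i)`: the coordinate is kept with
probability `1 - ε` and resampled as a fresh Bernoulli(`p`) bit with probability `ε`. -/
def cwt (p ε : ℝ) (x y : Bool) : ℝ :=
  bern p x * ((if y = x then 1 - ε else 0) + ε * bern p y)

/-- Joint weight of the pair `(ω, ω^ε)`. -/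
def jwt (p ε : ℝ) (q : (Λ → Bool) × (Λ → Bool)) : ℝ :=
  ∏ i, cwt p ε (q.1 i) (q.2 i)

/-- Probability of an event for the pair `(ω, ω^ε)`. -/
noncomputable def jpr (p ε : ℝ) (A : Set ((Λ → Bool) × (Λ → Bool))) : ℝ :=
  ∑ q : (Λ → Bool) × (Λ → Bool), A.indicator (jwt p ε) q

/-- Covariance of `f ω` and `f (ω^ε)`. -/
noncomputable def cov (p ε : ℝ) (f : (Λ → Bool) → Bool) : ℝ :=
  jpr p ε {q | f q.1 = true ∧ f q.2 = true}
    - jpr p ε {q | f q.1 = true} * jpr p ε {q | f q.2 = true}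

/-- `P(f ω ≠ f (ω^ε))`. -/
noncomputable def disagree (p ε : ℝ) (f : (Λ → Bool) → Bool) : ℝ :=
  jpr p ε {q | f q.1 ≠ f q.2}

/-- `f` is monotone increasing (with respect to the coordinatewise order `false < true`). -/
def MonotoneBool (f : (Λ → Bool) → Bool) : Prop :=
  ∀ ⦃ω ω' : Λ → Bool⦄, ω ≤ ω' → f ω ≤ f ω'

/-- `W` forces `f = 1`: any configuration that is all ones on `W` has `f`-value `true`. -/
def ForcesOne (f : (Λ → Bool) → Bool) (W : Finset Λ) : Prop :=
  ∀ ω : Λ → Bool, (∀ i ∈ W, ω i = true) → f ω = true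

/-- `W` is a 1-witness for `f`: a minimal set forcing `f = 1`. -/
def IsOneWitness (f : (Λ → Bool) → Bool) (W : Finset Λ) : Prop :=
  ForcesOne f W ∧ ∀ W' ⊆ W, ForcesOne f W' → W' = W

/-- `W` forces `f = 0`: any configuration that is all zeros on `W` has `f`-value `false`. -/
def ForcesZero (f : (Λ → Bool) → Bool) (W : Finset Λ) : Prop :=
  ∀ ω : Λ → Bool, (∀ i ∈ W, ω i = false) → f ω = false

/-- `W` is a 0-witness for `f`: a minimal set forcing `f = 0`. -/
def IsZeroWitness (f : (Λ → Bool) → Bool) (W : Finset Λ) : Prop :=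
  ForcesZero f W ∧ ∀ W' ⊆ W, ForcesZero f W' → W' = W

/-- `P(f(ω^ε) = 1 ∣ ω ≡ 1 on W)`. -/
noncomputable def prNoisyOneGivenOnes (p ε : ℝ) (f : (Λ → Bool) → Bool) (W : Finset Λ) : ℝ :=
  jpr p ε {q | f q.2 = true ∧ ∀ i ∈ W, q.1 i = true}
    / jpr p ε {q | ∀ i ∈ W, q.1 i = true}

/-- `P(f(ω^ε) = 0 ∣ ω ≡ 0 on W)`. -/
noncomputable def prNoisyZeroGivenZeros (p ε : ℝ) (f : (Λ → Bool) → Bool) (W : Finset Λ) : ℝ :=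
  jpr p ε {q | f q.2 = false ∧ ∀ i ∈ W, q.1 i = false}
    / jpr p ε {q | ∀ i ∈ W, q.1 i = false}

/-- `P(f(ω^ε) = 1 ∣ f(ω) = 1)`. -/
noncomputable def prNoisyOneGivenOne (p ε : ℝ) (f : (Λ → Bool) → Bool) : ℝ :=
  jpr p ε {q | f q.2 = true ∧ f q.1 = true} / jpr p ε {q | f q.1 = true}

/-- `max_{W ∈ W₁(f)} [P(f(ω^ε)=1 ∣ ω ≡ 1 on W) − P(f=1)]`. -/
noncomputable def oneSNSgap (p ε : ℝ) (f : (Λ → Bool) → Bool) : ℝ :=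
  ⨆ W : {W : Finset Λ // IsOneWitness f W},
    (prNoisyOneGivenOnes p ε f W.1 - pr p {ω | f ω = true})

/-- `max_{W ∈ W₀(f)} [P(f(ω^ε)=0 ∣ ω ≡ 0 on W) − P(f=0)]`. -/
noncomputable def zeroSNSgap (p ε : ℝ) (f : (Λ → Bool) → Bool) : ℝ :=
  ⨆ W : {W : Finset Λ // IsZeroWitness f W},
    (prNoisyZeroGivenZeros p ε f W.1 - pr p {ω | f ω = false})

end Basic

/-- A sequence of Boolean functions is non-degenerate if `P(fₙ = 1)` stays bounded
away from `0` and from `1`. -/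
def Nondeg {Λ : ℕ → Type*} [∀ n, Fintype (Λ n)] [∀ n, DecidableEq (Λ n)]
    (p : ℕ → ℝ) (f : ∀ n, (Λ n → Bool) → Bool) : Prop :=
  ∃ c : ℝ, 0 < c ∧ ∀ᶠ n : ℕ in atTop,
    c ≤ pr (p n) {ω | f n ω = true} ∧ pr (p n) {ω | f n ω = true} ≤ 1 - c

section Graphs

/-- The index set of the `n.choose 2` potential edges of a graph on `Fin n`. -/
abbrev EdgeIdx (n : ℕ) := {e : Fin n × Fin n // e.1 < e.2}

/-- The graph on `Fin n` determined by an edge configuration. -/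
def graphOf {n : ℕ} (ω : EdgeIdx n → Bool) : SimpleGraph (Fin n) where
  Adj i j := ∃ e : EdgeIdx n, ω e = true ∧
    ((e.1.1 = i ∧ e.1.2 = j) ∨ (e.1.1 = j ∧ e.1.2 = i))
  symm := by
    constructor
    rintro i j ⟨e, he, h⟩
    exact ⟨e, he, h.symm⟩
  loopless := by
    constructor
    rintro i ⟨e, he, (⟨h1, h2⟩ | ⟨h1, h2⟩)⟩ <;>
      · have := e.2
        rw [h1, h2] at this
        exact lt_irrefl i this

/-- `G` contains a cycle of length `ℓ`. -/
def hasCycleOfLength {V : Type*} (G : SimpleGraph V) (ℓ : ℕ) : Prop :=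
  ∃ (v : V) (c : G.Walk v v), c.IsCycle ∧ c.length = ℓ

/-- The minimum degree of `G` is at least `k`. -/
def minDegreeAtLeast {V : Type*} (G : SimpleGraph V) (k : ℕ) : Prop :=
  ∀ v : V, k ≤ (G.neighborSet v).ncard

/-- `G` contains a copy of `H`. -/
def containsCopy {V W : Type*} (G : SimpleGraph V) (H : SimpleGraph W) : Prop :=
  ∃ φ : H →g G, Function.Injective φ

/-- The number of copies of `H` in `G` (subgraphs of `G` isomorphic to `H`). -/
noncomputable def copyCount {V W : Type*} (G : SimpleGraph V) (H : SimpleGraph W) : ℕ :=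
  Nat.card {G' : G.Subgraph // Nonempty (G'.coe ≃g H)}

/-- A graph is strictly balanced if every proper subgraph with at least one vertex has a
strictly smaller average degree, i.e. edge/vertex ratio. -/
def StrictlyBalanced {V : Type*} [Fintype V] (H : SimpleGraph V) : Prop :=
  ∀ H' : H.Subgraph, H' ≠ ⊤ → H'.verts.Nonempty →
    (H'.edgeSet.ncard : ℝ) / (H'.verts.ncard : ℝ)
      < (H.edgeSet.ncard : ℝ) / (Fintype.card V : ℝ)

end Graphs

end BooleanNoise

namespace BooleanNoise

/-- The number of 0-witnesses of `f` occurring (entirely filled with zeros) in `ω`. -/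
noncomputable def zeroWitnessCount {Λ : Type*} [Fintype Λ] [DecidableEq Λ]
    (f : (Λ → Bool) → Bool) (ω : Λ → Bool) : ℕ :=
  {W : Finset Λ | IsZeroWitness f W ∧ ∀ i ∈ W, ω i = false}.ncard

section Witnesses

variable {Λ : Type*} {f : (Λ → Bool) → Bool} {W W' : Finset Λ}

lemma exists_subset_minimal [Finite Λ] {P : Finset Λ → Prop} {Z : Finset Λ} (hZ : P Z) :
    ∃ W ⊆ Z, P W ∧ ∀ W' ⊆ W, P W' → W' = W := by
  obtain ⟨W, hWZ, hmin⟩ := (Set.toFinite {V | P V}).exists_le_minimal hZ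
  exact ⟨W, hWZ, hmin.prop, fun W' hW'W hW' => le_antisymm hW'W (hmin.le_of_le hW' hW'W)⟩

lemma ForcesOne.inter_nonempty [DecidableEq Λ] (hW : ForcesOne f W) (hW' : ForcesZero f W') :
    (W ∩ W').Nonempty := by
  by_contra h
  rw [not_nonempty_iff_eq_empty, ← disjoint_iff_inter_eq_empty] at h
  have h1 := hW (fun i => decide (i ∈ W)) fun i hi => by simpa using hi
  have h0 := hW' (fun i => decide (i ∈ W)) fun i hi => by
    simpa using disjoint_right.mp h hi
  rw [h1] at h0
  exact Bool.noConfusion h0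

lemma MonotoneBool.forcesOne_univ [Fintype Λ] (hf : MonotoneBool f) {ω : Λ → Bool}
    (hω : f ω = true) : ForcesOne f univ := fun ω' hω' => by
  have hle : f ω ≤ f ω' := hf fun i => by simp [hω' i (mem_univ i)]
  rw [hω] at hle
  exact top_le_iff.mp hle

lemma MonotoneBool.exists_isZeroWitness_of_eq_false [Fintype Λ] (hf : MonotoneBool f)
    {ω : Λ → Bool} (hω : f ω = false) : ∃ W, IsZeroWitness f W ∧ ∀ i ∈ W, ω i = false := by
  have hZ : ForcesZero f {i | ω i = false} := fun ω' hω' => by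
    have hle : f ω' ≤ f ω := hf fun i => by
      cases hi : ω i
      · simp [hω' i (by simpa using hi)]
      · exact Bool.le_true _
    rw [hω] at hle
    exact le_bot_iff.mp hle
  obtain ⟨W, hWZ, hW⟩ := exists_subset_minimal hZ
  exact ⟨W, hW, fun i hi => by simpa using hWZ hi⟩

variable [Fintype Λ]

noncomputable def zeroWitnesses (f : (Λ → Bool) → Bool) : Finset (Finset Λ) :=
  (Set.toFinite {W | IsZeroWitness f W}).toFinset

lemma mem_zeroWitnesses : W ∈ zeroWitnesses f ↔ IsZeroWitness f W :=
  Set.Finite.mem_toFinset _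

lemma zeroWitnessCount_eq_sum [DecidableEq Λ] (f : (Λ → Bool) → Bool) (ω : Λ → Bool) :
    (zeroWitnessCount f ω : ℝ)
      = ∑ W ∈ zeroWitnesses f, {ω : Λ → Bool | ∀ i ∈ W, ω i = false}.indicator 1 ω := by
  classical
  have hset : {W | IsZeroWitness f W ∧ ∀ i ∈ W, ω i = false}
      = ↑((zeroWitnesses f).filter fun W => ∀ i ∈ W, ω i = false) := by
    ext W
    simp [mem_zeroWitnesses]
  rw [zeroWitnessCount, hset, Set.ncard_coe_finset, card_filter]
  simp [Set.indicator_apply]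

end Witnesses

section ProductFormulas

variable {Λ : Type*} [Fintype Λ] [DecidableEq Λ] {p ε : ℝ}

lemma pr_setOf_forall (P : Λ → Bool → Prop) [∀ i b, Decidable (P i b)] :
    pr p {ω | ∀ i, P i (ω i)} = ∏ i, ∑ b, if P i b then bern p b else 0 := by
  rw [Fintype.prod_sum, pr]
  refine sum_congr rfl fun ω _ => ?_
  simp [Fintype.prod_ite_zero, Set.indicator_apply, wt]

lemma jpr_setOf_forall (P : Λ → Bool → Bool → Prop) [∀ i x y, Decidable (P i x y)] :
    jpr p ε {q | ∀ i, P i (q.1 i) (q.2 i)}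
      = ∏ i, ∑ v : Bool × Bool, if P i v.1 v.2 then cwt p ε v.1 v.2 else 0 := by
  rw [Fintype.prod_sum, jpr]
  refine (Fintype.sum_equiv (Equiv.arrowProdEquivProdArrow _ _ _) _ _ fun v => ?_).symm
  simp [Fintype.prod_ite_zero, Set.indicator_apply, jwt, Equiv.arrowProdEquivProdArrow]

lemma pr_zerosOn (W : Finset Λ) : pr p {ω | ∀ i ∈ W, ω i = false} = (1 - p) ^ #W := by
  calc pr p {ω | ∀ i ∈ W, ω i = false}
      = ∏ i, if i ∈ W then 1 - p else 1 := by
        rw [pr_setOf_forall fun i b => i ∈ W → b = false]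
        refine prod_congr rfl fun i _ => ?_
        by_cases hi : i ∈ W <;> simp [hi, bern]
    _ = (1 - p) ^ #W := by rw [Fintype.prod_ite_mem, prod_const]

lemma jpr_onesOn_zerosOn (W W' : Finset Λ) :
    jpr p ε {q | (∀ i ∈ W, q.1 i = true) ∧ ∀ i ∈ W', q.2 i = false}
      = ε ^ #(W ∩ W') * p ^ #W * (1 - p) ^ #W' := by
  have hset : {q : (Λ → Bool) × (Λ → Bool) | (∀ i ∈ W, q.1 i = true) ∧ ∀ i ∈ W', q.2 i = false}
      = {q | ∀ i, (i ∈ W → q.1 i = true) ∧ (i ∈ W' → q.2 i = false)} := by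
    ext q
    simp [forall_and]
  calc jpr p ε {q | (∀ i ∈ W, q.1 i = true) ∧ ∀ i ∈ W', q.2 i = false}
      = ∏ i, ((if i ∈ W ∩ W' then ε else 1) * (if i ∈ W then p else 1)
          * (if i ∈ W' then 1 - p else 1)) := by
        rw [hset, jpr_setOf_forall fun i x y => (i ∈ W → x = true) ∧ (i ∈ W' → y = false)]
        refine prod_congr rfl fun i _ => ?_
        by_cases hi : i ∈ W <;> by_cases hi' : i ∈ W' <;>
          simp [hi, hi', Fintype.sum_prod_type, cwt, bern] <;> ring
    _ = ε ^ #(W ∩ W') * p ^ #W * (1 - p) ^ #W' := by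
        simp only [prod_mul_distrib, Fintype.prod_ite_mem, prod_const]

lemma jpr_onesOn (W : Finset Λ) : jpr p ε {q | ∀ i ∈ W, q.1 i = true} = p ^ #W := by
  simpa using jpr_onesOn_zerosOn (p := p) (ε := ε) W ∅

end ProductFormulas

section JointLaw

variable {Λ : Type*} [Fintype Λ] {p ε : ℝ}

lemma bern_nonneg (hp : p ∈ Set.Icc 0 1) (b : Bool) : 0 ≤ bern p b := by
  cases b <;> simp [bern, hp.1, hp.2]

lemma cwt_nonneg (hp : p ∈ Set.Icc 0 1) (hε : ε ∈ Set.Icc 0 1) (x y : Bool) :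
    0 ≤ cwt p ε x y := by
  refine mul_nonneg (bern_nonneg hp x) (add_nonneg ?_ (mul_nonneg hε.1 (bern_nonneg hp y)))
  split_ifs <;> linarith [hε.2]

lemma jwt_nonneg (hp : p ∈ Set.Icc 0 1) (hε : ε ∈ Set.Icc 0 1) (q : (Λ → Bool) × (Λ → Bool)) :
    0 ≤ jwt p ε q :=
  prod_nonneg fun _ _ => cwt_nonneg hp hε _ _

variable [DecidableEq Λ] (hp : p ∈ Set.Icc 0 1) (hε : ε ∈ Set.Icc 0 1)
include hp hε

lemma jpr_mono {A B : Set ((Λ → Bool) × (Λ → Bool))} (h : A ⊆ B) : jpr p ε A ≤ jpr p ε B :=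
  sum_le_sum fun q _ => Set.indicator_le_indicator_of_subset h (jwt_nonneg hp hε) q

lemma jpr_union_le (A B : Set ((Λ → Bool) × (Λ → Bool))) :
    jpr p ε (A ∪ B) ≤ jpr p ε A + jpr p ε B := by
  rw [jpr, jpr, jpr, ← sum_add_distrib]
  refine sum_le_sum fun q _ => ?_
  linarith [Set.indicator_union_add_inter_apply (jwt p ε) A B q,
    Set.indicator_nonneg (fun q _ => jwt_nonneg hp hε q) (s := A ∩ B) q]

lemma jpr_biUnion_le {ι : Type*} (s : Finset ι) (A : ι → Set ((Λ → Bool) × (Λ → Bool))) :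
    jpr p ε (⋃ i ∈ s, A i) ≤ ∑ i ∈ s, jpr p ε (A i) := by
  classical
  induction s using Finset.induction_on with
  | empty => simp [jpr]
  | insert i s hi ih =>
    rw [set_biUnion_insert, sum_insert hi]
    exact (jpr_union_le hp hε _ _).trans (add_le_add le_rfl ih)

end JointLaw

section NoisyWitness

variable {Λ : Type*} [Fintype Λ] [DecidableEq Λ] {p ε : ℝ} {f : (Λ → Bool) → Bool}
  {W W' : Finset Λ}

lemma ev_zeroWitnessCount (f : (Λ → Bool) → Bool) :
    ev p (fun ω => (zeroWitnessCount f ω : ℝ)) = ∑ W ∈ zeroWitnesses f, (1 - p) ^ #W := by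
  simp_rw [ev, zeroWitnessCount_eq_sum, mul_sum]
  rw [sum_comm]
  refine sum_congr rfl fun W _ => ?_
  rw [← pr_zerosOn, pr]
  refine sum_congr rfl fun ω _ => ?_
  simp [Set.indicator_apply]

lemma nonempty_of_pr_ne_zero {A : Set (Λ → Bool)} (h : pr p A ≠ 0) : A.Nonempty :=
  let ⟨ω, _, hω⟩ := exists_ne_zero_of_sum_ne_zero h
  ⟨ω, Set.mem_of_indicator_ne_zero hω⟩

lemma jpr_onesOn_zerosOn_le (hp : p ∈ Set.Icc 0 1) (hε : ε ∈ Set.Icc 0 1)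
    (hW : ForcesOne f W) (hW' : ForcesZero f W') :
    jpr p ε {q | (∀ i ∈ W, q.1 i = true) ∧ ∀ i ∈ W', q.2 i = false}
      ≤ ε * (1 - p) ^ #W' * p ^ #W := by
  have hεpow : ε ^ #(W ∩ W') ≤ ε :=
    pow_le_of_le_one hε.1 hε.2 (hW.inter_nonempty hW').card_pos.ne'
  have hmass := mul_nonneg (pow_nonneg hp.1 #W) (pow_nonneg (sub_nonneg.2 hp.2) #W')
  calc _ = ε ^ #(W ∩ W') * (p ^ #W * (1 - p) ^ #W') := by rw [jpr_onesOn_zerosOn, mul_assoc]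
    _ ≤ ε * (p ^ #W * (1 - p) ^ #W') := mul_le_mul_of_nonneg_right hεpow hmass
    _ = ε * (1 - p) ^ #W' * p ^ #W := by ring

lemma jpr_onesOn_le_add_sum (hp : p ∈ Set.Icc 0 1) (hε : ε ∈ Set.Icc 0 1) (hf : MonotoneBool f)
    (W : Finset Λ) :
    jpr p ε {q | ∀ i ∈ W, q.1 i = true}
      ≤ jpr p ε {q | f q.2 = true ∧ ∀ i ∈ W, q.1 i = true}
        + ∑ W' ∈ zeroWitnesses f,
            jpr p ε {q | (∀ i ∈ W, q.1 i = true) ∧ ∀ i ∈ W', q.2 i = false} := by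
  have hcover : {q : (Λ → Bool) × (Λ → Bool) | ∀ i ∈ W, q.1 i = true}
      ⊆ {q | f q.2 = true ∧ ∀ i ∈ W, q.1 i = true}
        ∪ ⋃ W' ∈ zeroWitnesses f, {q | (∀ i ∈ W, q.1 i = true) ∧ ∀ i ∈ W', q.2 i = false} := by
    intro q hq
    cases hfq : f q.2
    · obtain ⟨W', hW', hzero⟩ := hf.exists_isZeroWitness_of_eq_false hfq
      exact Or.inr (Set.mem_biUnion (mem_zeroWitnesses.2 hW') ⟨hq, hzero⟩)
    · exact Or.inl ⟨hfq, hq⟩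
  exact (jpr_mono hp hε hcover).trans <| (jpr_union_le hp hε _ _).trans <|
    add_le_add le_rfl (jpr_biUnion_le hp hε _ _)

theorem one_sub_mul_le_prNoisyOneGivenOnes (hp : p ∈ Set.Ioc 0 1) (hε : ε ∈ Set.Icc 0 1)
    (hf : MonotoneBool f) (hW : ForcesOne f W) :
    1 - ev p (fun ω => (zeroWitnessCount f ω : ℝ)) * ε ≤ prNoisyOneGivenOnes p ε f W := by
  have hp' : p ∈ Set.Icc 0 1 := Set.Ioc_subset_Icc_self hp
  have hsplit := jpr_onesOn_le_add_sum hp' hε hf W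
  have hbad : ∑ W' ∈ zeroWitnesses f,
        jpr p ε {q | (∀ i ∈ W, q.1 i = true) ∧ ∀ i ∈ W', q.2 i = false}
      ≤ ε * ev p (fun ω => (zeroWitnessCount f ω : ℝ)) * p ^ #W := by
    rw [ev_zeroWitnessCount, mul_sum, sum_mul]
    exact sum_le_sum fun W' hW' =>
      jpr_onesOn_zerosOn_le hp' hε hW (mem_zeroWitnesses.1 hW').1
  rw [jpr_onesOn] at hsplit
  rw [prNoisyOneGivenOnes, jpr_onesOn, le_div_iff₀ (pow_pos hp.1 _)]
  linarith

theorem le_oneSNSgap (hp : p ∈ Set.Ioc 0 1) (hε : ε ∈ Set.Icc 0 1) (hf : MonotoneBool f)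
    {ω : Λ → Bool} (hω : f ω = true) :
    1 - ev p (fun ω => (zeroWitnessCount f ω : ℝ)) * ε - pr p {ω | f ω = true}
      ≤ oneSNSgap p ε f := by
  obtain ⟨W, -, hW⟩ := exists_subset_minimal (hf.forcesOne_univ hω)
  exact (sub_le_sub_right (one_sub_mul_le_prNoisyOneGivenOnes hp hε hf hW.1) _).trans <|
    le_ciSup (f := fun W : {W // IsOneWitness f W} =>
      prNoisyOneGivenOnes p ε f W.1 - pr p {ω | f ω = true}) (Finite.bddAbove_range _) ⟨W, hW⟩

end NoisyWitness

/-- If the expected number `E[Y_n]` of occurring 0-witnesses is uniformly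
bounded by `C`, then for every `ε ∈ (0,1)`, every `n` and every 1-witness `W`,
`P(f_n(ω^ε)=1 ∣ ω ≡ 1 on W) ≥ 1 − C·ε`; consequently, if `(f_n)` is also non-degenerate,
then it is not 1-strongly noise sensitive. -/
theorem stmt18 {Λ : ℕ → Type*} [∀ n, Fintype (Λ n)] [∀ n, DecidableEq (Λ n)]
    (p : ℕ → ℝ) (hp : ∀ n, p n ∈ Set.Ioo (0 : ℝ) 1)
    (f : ∀ n, (Λ n → Bool) → Bool) (hmono : ∀ n, MonotoneBool (f n))
    (C : ℝ)
    (hbdd : ∀ n, ev (p n) (fun ω => (zeroWitnessCount (f n) ω : ℝ)) ≤ C) :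
    (∀ ε : ℝ, ε ∈ Set.Ioo (0 : ℝ) 1 → ∀ n (W : Finset (Λ n)), IsOneWitness (f n) W →
      1 - C * ε ≤ prNoisyOneGivenOnes (p n) ε (f n) W) ∧
    (Nondeg p f →
      ¬ ∀ ε : ℝ, ε ∈ Set.Ioo (0 : ℝ) 1 →
        Tendsto (fun n => oneSNSgap (p n) ε (f n)) atTop (nhds 0)) := by
  have hp' n : p n ∈ Set.Ioc 0 1 := Set.Ioo_subset_Ioc_self (hp n)
  refine ⟨fun ε hε n W hW => ?_, fun ⟨c, hc, hpr⟩ hSNS => ?_⟩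
  · have := one_sub_mul_le_prNoisyOneGivenOnes (hp' n) (Set.Ioo_subset_Icc_self hε) (hmono n) hW.1
    linarith [mul_le_mul_of_nonneg_right (hbdd n) hε.1.le]
  obtain ⟨ε, hCε, hε⟩ : ∃ ε, C * ε < c ∧ ε ∈ Set.Ioo 0 1 :=
    ((((continuous_const_mul C).tendsto' 0 0 (mul_zero C)).mono_left nhdsWithin_le_nhds).eventually
      (gt_mem_nhds hc) |>.and (Ioo_mem_nhdsGT one_pos)).exists
  have hgap : ∀ᶠ n in atTop, c - C * ε ≤ oneSNSgap (p n) ε (f n) := by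
    filter_upwards [hpr] with n ⟨hlow, hupp⟩
    obtain ⟨ω, hω⟩ := nonempty_of_pr_ne_zero (hc.trans_le hlow).ne'
    have := le_oneSNSgap (hp' n) (Set.Ioo_subset_Icc_self hε) (hmono n) hω
    linarith [mul_le_mul_of_nonneg_right (hbdd n) hε.1.le]
  linarith [ge_of_tendsto (hSNS ε hε) hgap]

end BooleanNoise
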